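/- The set G_{n,m} is an abelian group under composition of maps: it is closed under composition, composition restricted to G_{n,m} is commutative, the identity map θ_{m,0} lies in G_{n,m}, and every f ∈ G_{n,m} has a two-sided compositional inverse belonging to G_{n,m}. In particular, every f ∈ G_{n,m} is a bijection of F_2^n. -/

import Mathlib

/-- Index `i + j` computed modulo `n`, for `i : Fin n` and `j : ℕ`. -/
def idx {n : ℕ} (i : Fin n) (j : ℕ) : Fin n :=
  ⟨(i.val + j) % n, Nat.mod_lt _ i.pos⟩

/-- The map `θ_{m,k} : F_2^n → F_2^n`; `θ_{m,0}` is the identity map, and for `k ≥ 1`,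
`(θ_{m,k}(x))_i = x_{i+mk} · ∏_{1 ≤ j ≤ mk−1, m ∤ j} (x_{i+j} + 1)` (indices mod `n`). -/
def theta (n m k : ℕ) : (Fin n → ZMod 2) → Fin n → ZMod 2 :=
  if k = 0 then id
  else fun x i =>
    x (idx i (m * k)) *
      ∏ j ∈ (Finset.Ico 1 (m * k)).filter (fun j => ¬ m ∣ j), (x (idx i j) + 1)

/-- The set `G_{n,m}` of maps `θ_{m,0} + Σ_{k=1}^{⌊n/m⌋} a_k • θ_{m,k}` with `a_k ∈ F_2`. -/
def Gset (n m : ℕ) : Set ((Fin n → ZMod 2) → Fin n → ZMod 2) :=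
  { F | ∃ a : ℕ → ZMod 2,
      F = theta n m 0 + ∑ k ∈ Finset.Icc 1 (n / m), a k • theta n m k }

/-!
Encode `Σ aₖ θ_{m,k}` by the polynomial `Σ aₖ Xᵏ` over `𝔽₂`. The combinatorial heart is the
identity `θ_{m,k} ∘ (θ_{m,0} + θ_{m,l}) = θ_{m,k} + θ_{m,k+l}`: two occurrences of the pattern that
defines `θ_{m,l}` cannot overlap at an offset that is not a multiple of `m`. Since composition is
additive in its left argument, composing on the right with `θ_{m,0} + θ_{m,l}` becomes
multiplication by `1 + Xˡ`. As `m ∤ n`, `θ_{m,k} = 0` for `k > ⌊n/m⌋`, so only the class modulo `X ^ (⌊n/m⌋ + 1)`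
matters, and modulo that power every polynomial with constant term one is a product of factors
`1 + Xˡ`. Hence `G_{n,m}` is the image of the abelian group of such truncated polynomials,
composition corresponding to multiplication.
-/

namespace ZMod

lemma ne_zero_iff_eq_one_two : ∀ a : ZMod 2, a ≠ 0 ↔ a = 1 := by decide

lemma ite_eq_one_two : ∀ a : ZMod 2, (if a = 1 then 1 else 0) = a := by decide

end ZMod

section Pattern

variable {m p q : ℕ} {u : ℕ → ZMod 2}

def ZerosBelow (m p : ℕ) (u : ℕ → ZMod 2) : Prop :=
  ∀ j, 0 < j → j < p → ¬ m ∣ j → u j = 0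

def Pattern (m p : ℕ) (u : ℕ → ZMod 2) : Prop :=
  u p = 1 ∧ ZerosBelow m p u

open Classical in
noncomputable def patternIndicator (m p : ℕ) (u : ℕ → ZMod 2) : ZMod 2 :=
  if Pattern m p u then 1 else 0

lemma patternIndicator_eq_one_iff : patternIndicator m p u = 1 ↔ Pattern m p u := by
  unfold patternIndicator; split_ifs with h <;> simp [h]

lemma patternIndicator_eq_zero_iff : patternIndicator m p u = 0 ↔ ¬ Pattern m p u := by
  unfold patternIndicator; split_ifs with h <;> simp [h]

lemma Pattern.not_of_eq_one {j : ℕ} (hj : 0 < j) (hjp : j < p) (hjm : ¬ m ∣ j) (hu : u j = 1) :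
    ¬ Pattern m p u :=
  fun h => zero_ne_one ((h.2 j hj hjp hjm).symm.trans hu)

lemma pattern_add_iff (hp : m ∣ p) :
    Pattern m (p + q) u ↔ ZerosBelow m p u ∧ Pattern m q (fun t => u (p + t)) := by
  constructor
  · rintro ⟨hpq, hz⟩
    refine ⟨fun j hj hjp hjm => hz j hj (by omega) hjm, hpq, fun t ht htq htm => ?_⟩
    exact hz (p + t) (by omega) (by omega) (by rwa [Nat.dvd_add_right hp])
  · rintro ⟨hz, hpq, hzq⟩
    refine ⟨hpq, fun j hj hjpq hjm => ?_⟩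
    rcases lt_trichotomy j p with hjp | rfl | hjp
    · exact hz j hj hjp hjm
    · exact absurd hp hjm
    · have hjm' : ¬ m ∣ j - p := by rwa [← Nat.dvd_add_right hp, Nat.add_sub_cancel' hjp.le]
      simpa [Nat.add_sub_cancel' hjp.le] using hzq (j - p) (by omega) (by omega) hjm'

/-- Each occurrence would see the other's final one at a position where it needs a zero. -/
lemma Pattern.overlap {j : ℕ} (hp : m ∣ p) (hq : m ∣ q) (hjp : j < p) (hjm : ¬ m ∣ j)
    (hpj : p < j + q) (h : Pattern m q (fun t => u (j + t))) :
    u p = 0 ∧ ¬ Pattern m q (fun t => u (p + t)) := by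
  constructor
  · have hm : ¬ m ∣ p - j := fun hd =>
      hjm (by simpa [Nat.sub_sub_self hjp.le] using Nat.dvd_sub hp hd)
    simpa [Nat.add_sub_cancel' hjp.le] using h.2 (p - j) (by omega) (by omega) hm
  · intro h'
    have hm : ¬ m ∣ j + q - p := fun hd => hjm <| (Nat.dvd_add_left hq).mp <| by
      simpa [Nat.sub_add_cancel hpj.le] using Nat.dvd_add hd hp
    have := h'.2 (j + q - p) (by omega) (by omega) hm
    simp only [Nat.add_sub_cancel' hpj.le, h.1] at this
    exact one_ne_zero this

/-- The core identity `θ_p ∘ (id + θ_q) = θ_p + θ_{p+q}`, read at one coordinate. -/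
lemma patternIndicator_add_shift (hp : m ∣ p) (hq : m ∣ q) (hq0 : 0 < q) (u : ℕ → ZMod 2) :
    patternIndicator m p (u + fun j => patternIndicator m q (fun t => u (j + t))) =
      patternIndicator m p u + patternIndicator m (p + q) u := by
  classical
  set w : ℕ → ZMod 2 := fun j => patternIndicator m q (fun t => u (j + t))
  have hw1 (j : ℕ) : w j = 1 ↔ Pattern m q (fun t => u (j + t)) := patternIndicator_eq_one_iff
  have hw0 (j : ℕ) : w j = 0 ↔ ¬ Pattern m q (fun t => u (j + t)) := patternIndicator_eq_zero_iff
  by_cases hz : ZerosBelow m p u ∧ ZerosBelow m p w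
  · have hv : Pattern m p (u + w) ↔ (u + w) p = 1 :=
      ⟨And.left, fun h => ⟨h, fun j hj hjp hjm => by
        simp [hz.1 j hj hjp hjm, hz.2 j hj hjp hjm]⟩⟩
    have hu : Pattern m p u ↔ u p = 1 := ⟨And.left, fun h => ⟨h, hz.1⟩⟩
    have hpq : Pattern m (p + q) u ↔ w p = 1 :=
      ((pattern_add_iff hp).trans ⟨And.right, fun h => ⟨hz.1, h⟩⟩).trans (hw1 p).symm
    simp only [patternIndicator, hv, hu, hpq, ZMod.ite_eq_one_two, Pi.add_apply]
  -- Otherwise all three patterns fail; look at the last obstruction below `p`.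
  let Bad (j : ℕ) : Prop := 0 < j ∧ j < p ∧ ¬ m ∣ j ∧ (u j = 1 ∨ w j = 1)
  obtain ⟨j, hj⟩ : ∃ j, Bad j := by
    simp only [ZerosBelow, not_and_or, not_forall, ZMod.ne_zero_iff_eq_one_two] at hz
    rcases hz with ⟨j, hj, hjp, hjm, hu⟩ | ⟨j, hj, hjp, hjm, hw⟩
    exacts [⟨j, hj, hjp, hjm, .inl hu⟩, ⟨j, hj, hjp, hjm, .inr hw⟩]
  set j₀ := Nat.findGreatest Bad p
  obtain ⟨hj₀, hj₀p, hj₀m, hj₀u⟩ : Bad j₀ := Nat.findGreatest_spec hj.2.1.le hj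
  have hmax (j : ℕ) (hj : Bad j) : j ≤ j₀ := Nat.le_findGreatest hj.2.1.le hj
  have hcases : (u j₀ = 1 ∧ w j₀ = 0) ∨ (u p = 0 ∧ w p = 0) := by
    by_cases hpat : Pattern m q (fun t => u (j₀ + t))
    · right
      rcases lt_trichotomy (j₀ + q) p with hlt | heq | hgt
      · have : Bad (j₀ + q) :=
          ⟨by omega, hlt, by rwa [Nat.dvd_add_left hq], .inl hpat.1⟩
        exact absurd (hmax _ this) (by omega)
      · exact absurd ((Nat.dvd_add_left hq).mp (heq ▸ hp)) hj₀m
      · obtain ⟨hup, hnp⟩ := Pattern.overlap hp hq hj₀p hj₀m hgt hpat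
        exact ⟨hup, (hw0 p).mpr hnp⟩
    · exact .inl ⟨hj₀u.resolve_right (mt (hw1 j₀).mp hpat), (hw0 j₀).mpr hpat⟩
  have hv : ¬ Pattern m p (u + w) := by
    rcases hcases with ⟨hu, hw⟩ | ⟨hu, hw⟩
    · exact Pattern.not_of_eq_one hj₀ hj₀p hj₀m (by simp [hu, hw])
    · exact fun h => by simpa [hu, hw] using h.1
  have hu : ¬ Pattern m p u := by
    rcases hcases with ⟨hu, -⟩ | ⟨hu, -⟩
    · exact Pattern.not_of_eq_one hj₀ hj₀p hj₀m hu
    · exact fun h => by simpa [hu] using h.1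
  have hpq : ¬ Pattern m (p + q) u := by
    rcases hcases with ⟨hu, -⟩ | ⟨-, hw⟩
    · exact Pattern.not_of_eq_one hj₀ (by omega) hj₀m hu
    · exact fun h => (hw0 p).mp hw ((pattern_add_iff hp).mp h).2
  simp only [patternIndicator, if_neg hv, if_neg hu, if_neg hpq, add_zero]

end Pattern

section Theta

variable {n m : ℕ}

lemma idx_zero (i : Fin n) : idx i 0 = i := by
  ext; simp [idx, Nat.mod_eq_of_lt i.isLt]

lemma idx_idx (i : Fin n) (j t : ℕ) : idx (idx i j) t = idx i (j + t) := by
  ext; simp [idx, Nat.add_assoc]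

lemma idx_add_self (i : Fin n) (j : ℕ) : idx i (j + n) = idx i j := by
  ext; simp [idx, ← Nat.add_assoc]

lemma theta_apply (k : ℕ) (x : Fin n → ZMod 2) (i : Fin n) :
    theta n m k x i = patternIndicator m (m * k) (fun j => x (idx i j)) := by
  classical
  by_cases hk : k = 0
  · subst hk
    have hz : ZerosBelow m 0 (fun j => x (idx i j)) := fun j _ hj => by omega
    simp only [theta, if_pos, id_eq, patternIndicator, Pattern, mul_zero, idx_zero]
    conv_lhs => rw [← ZMod.ite_eq_one_two (x i)]
    exact if_congr (by simp [hz]) rfl rfl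
  · have hone (a : ZMod 2) : a + 1 = if a = 0 then 1 else 0 := by fin_cases a <;> rfl
    have hzero : (∀ j ∈ (Finset.Ico 1 (m * k)).filter (fun j => ¬ m ∣ j), x (idx i j) = 0) ↔
        ZerosBelow m (m * k) (fun j => x (idx i j)) := by
      simp [ZerosBelow, Nat.one_le_iff_ne_zero, Nat.pos_iff_ne_zero, and_imp]
    simp only [theta, if_neg hk, hone, Finset.prod_boole, patternIndicator]
    conv_lhs => rw [← ZMod.ite_eq_one_two (x (idx i (m * k)))]
    rw [ite_zero_mul_ite_zero, one_mul]
    exact if_congr (by rw [hzero]; rfl) rfl rfl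

lemma theta_comp_id_add_theta (hm : 0 < m) {l : ℕ} (hl : 0 < l) (k : ℕ) :
    theta n m k ∘ (id + theta n m l) = theta n m k + theta n m (k + l) := by
  funext x i
  have hshift (j : ℕ) : theta n m l x (idx i j) =
      patternIndicator m (m * l) (fun t => x (idx i (j + t))) := by
    simp only [theta_apply, idx_idx]
  simp only [Function.comp_apply, Pi.add_apply, id_eq, theta_apply k, theta_apply (k + l), hshift,
    mul_add]
  exact patternIndicator_add_shift (dvd_mul_right m k) (dvd_mul_right m l)
    (Nat.mul_pos hm hl) (fun j => x (idx i j))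

lemma theta_eq_zero (hmn : ¬ m ∣ n) {k : ℕ} (hk : n < m * k) : theta n m k = 0 := by
  funext x i
  rw [theta_apply, Pi.zero_apply, Pi.zero_apply, patternIndicator_eq_zero_iff]
  -- The coordinate `i + m k - n` is `i + m k` again, where the pattern needs a one.
  rintro ⟨hone, hzero⟩
  have hdvd : ¬ m ∣ m * k - n := fun hd =>
    hmn (by simpa [Nat.sub_sub_self hk.le] using Nat.dvd_sub (dvd_mul_right m k) hd)
  have := hzero (m * k - n) (by omega) (by have := i.pos; omega) hdvd
  simp only [← idx_add_self i (m * k - n), Nat.sub_add_cancel hk.le, hone] at this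
  exact one_ne_zero this

end Theta

lemma CharTwo.pow_two_pow_dvd_pow_two_pow_sub_one {R : Type*} [CommRing R] [CharP R 2] {a b : R}
    (h : a ∣ b - 1) (k : ℕ) : a ^ 2 ^ k ∣ b ^ 2 ^ k - 1 := by
  have := pow_dvd_pow_of_dvd h (2 ^ k)
  rwa [sub_pow_char_pow, one_pow] at this

open Polynomial

lemma Polynomial.X_dvd_sub_one {R : Type*} [Ring R] {Q : R[X]} (h : Q.coeff 0 = 1) : X ∣ Q - 1 :=
  X_dvd_iff.mpr (by rw [coeff_sub, coeff_one_zero, h, sub_self])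

lemma Polynomial.X_pow_dvd_pow_two_pow_sub_one {Q : (ZMod 2)[X]} (h : X ∣ Q - 1) (N : ℕ) :
    X ^ N ∣ Q ^ 2 ^ N - 1 :=
  (pow_dvd_pow X Nat.lt_two_pow_self.le).trans (CharTwo.pow_two_pow_dvd_pow_two_pow_sub_one h N)

section ThetaPoly

variable {n m : ℕ}

noncomputable def thetaPoly (n m : ℕ) :
    (ZMod 2)[X] →ₗ[ZMod 2] (Fin n → ZMod 2) → Fin n → ZMod 2 :=
  lsum fun k => LinearMap.toSpanSingleton (ZMod 2) _ (theta n m k)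

lemma thetaPoly_monomial (k : ℕ) (a : ZMod 2) :
    thetaPoly n m (monomial k a) = a • theta n m k := by
  simp [thetaPoly, lsum_apply, sum_monomial_index]

lemma thetaPoly_X_pow (k : ℕ) : thetaPoly n m (X ^ k) = theta n m k := by
  rw [X_pow_eq_monomial, thetaPoly_monomial, one_smul]

lemma thetaPoly_one : thetaPoly n m 1 = id := by
  rw [← pow_zero X, thetaPoly_X_pow]; rfl

lemma thetaPoly_mul_one_add_X_pow (hm : 0 < m) {l : ℕ} (hl : 0 < l) (P : (ZMod 2)[X]) :
    thetaPoly n m (P * (1 + X ^ l)) = thetaPoly n m P ∘ (id + theta n m l) := by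
  induction P using Polynomial.induction_on' with
  | add p q hp hq => rw [add_mul, map_add, map_add, hp, hq, Pi.add_comp]
  | monomial k a =>
    rw [mul_add, mul_one, monomial_mul_X_pow, map_add, thetaPoly_monomial, thetaPoly_monomial,
      Pi.smul_comp, theta_comp_id_add_theta hm hl, smul_add]

lemma thetaPoly_eq_zero_of_X_pow_dvd (hm : 0 < m) (hmn : ¬ m ∣ n) {P : (ZMod 2)[X]}
    (h : X ^ (n / m + 1) ∣ P) : thetaPoly n m P = 0 := by
  obtain ⟨R, rfl⟩ := h
  induction R using Polynomial.induction_on' with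
  | add p q hp hq => rw [mul_add, map_add, hp, hq, add_zero]
  | monomial k a =>
    rw [X_pow_mul_monomial, thetaPoly_monomial, theta_eq_zero hmn, smul_zero]
    exact (Nat.lt_mul_div_succ n hm).trans_le (Nat.mul_le_mul_left m (by omega))

lemma thetaPoly_eq_of_X_pow_dvd_sub (hm : 0 < m) (hmn : ¬ m ∣ n) {P Q : (ZMod 2)[X]}
    (h : X ^ (n / m + 1) ∣ P - Q) : thetaPoly n m P = thetaPoly n m Q :=
  sub_eq_zero.mp (by rw [← map_sub]; exact thetaPoly_eq_zero_of_X_pow_dvd hm hmn h)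

variable (n m) in
def compMulSubmonoid : Submonoid (ZMod 2)[X] where
  carrier := {Q | ∀ P, thetaPoly n m P ∘ thetaPoly n m Q = thetaPoly n m (P * Q)}
  one_mem' P := by rw [thetaPoly_one, mul_one, Function.comp_id]
  mul_mem' {Q₁ Q₂} h₁ h₂ P := by
    rw [← h₂ Q₁, ← Function.comp_assoc, h₁, h₂, mul_assoc]

lemma one_add_X_pow_mem_compMulSubmonoid (hm : 0 < m) {l : ℕ} (hl : 0 < l) :
    1 + X ^ l ∈ compMulSubmonoid n m := fun P => by
  rw [thetaPoly_mul_one_add_X_pow hm hl, map_add, thetaPoly_one, thetaPoly_X_pow]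

lemma mem_compMulSubmonoid_of_X_pow_dvd_sub (hm : 0 < m) (hmn : ¬ m ∣ n) {Q Q' : (ZMod 2)[X]}
    (h : X ^ (n / m + 1) ∣ Q - Q') (hQ' : Q' ∈ compMulSubmonoid n m) :
    Q ∈ compMulSubmonoid n m := fun P => by
  have hP : X ^ (n / m + 1) ∣ P * Q - P * Q' := by rw [← mul_sub]; exact dvd_mul_of_dvd_right h P
  rw [thetaPoly_eq_of_X_pow_dvd_sub hm hmn h, hQ' P, thetaPoly_eq_of_X_pow_dvd_sub hm hmn hP]

/-- Modulo `X ^ (n / m + 1)`, every `Q` with constant term one is a product of factors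
`1 + Xʲ`: if `Q ≡ 1 + Xʲ (mod X ^ (j + 1))` then `Q (1 + Xʲ) ≡ 1 (mod X ^ (j + 1))`, and
`(1 + Xʲ) ^ (2 ^ N) ≡ 1` makes `1 + Xʲ` invertible inside the submonoid. -/
lemma mem_compMulSubmonoid (hm : 0 < m) (hmn : ¬ m ∣ n) {Q : (ZMod 2)[X]} (hQ : Q.coeff 0 = 1) :
    Q ∈ compMulSubmonoid n m := by
  set N := n / m + 1
  suffices key : ∀ r j, N ≤ j + r → 0 < j → ∀ Q : (ZMod 2)[X], X ^ j ∣ Q - 1 →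
      Q ∈ compMulSubmonoid n m from
    key N 1 (by omega) one_pos Q (by rw [pow_one]; exact X_dvd_sub_one hQ)
  intro r
  induction r with
  | zero =>
    intro j hj _ Q hQ
    exact mem_compMulSubmonoid_of_X_pow_dvd_sub hm hmn ((pow_dvd_pow X hj).trans hQ) (one_mem _)
  | succ r ih =>
    intro j hj hj0 Q ⟨R, hR⟩
    by_cases hR0 : R.coeff 0 = 0
    · refine ih (j + 1) (by omega) (by omega) Q ?_
      rw [hR, pow_succ]
      exact mul_dvd_mul_left _ (X_dvd_iff.mpr hR0)
    have hR1 : R.coeff 0 = 1 := (ZMod.ne_zero_iff_eq_one_two _).mp hR0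
    have hstep : Q * (1 + X ^ j) ∈ compMulSubmonoid n m := by
      refine ih (j + 1) (by omega) (by omega) _ ?_
      have hQ : Q * (1 + X ^ j) - 1 = X ^ j * (1 + R) + X ^ (2 * j) * R := by
        rw [show Q = 1 + X ^ j * R by rw [← hR]; ring]; ring
      rw [hQ]
      refine dvd_add ?_ (dvd_mul_of_dvd_left (pow_dvd_pow X (by omega)) R)
      rw [pow_succ]
      exact mul_dvd_mul_left _ (X_dvd_iff.mpr (by rw [coeff_add, coeff_one_zero, hR1]; rfl))
    have hinv : (1 + X ^ j) ^ (2 ^ N - 1) ∈ compMulSubmonoid n m :=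
      pow_mem (one_add_X_pow_mem_compMulSubmonoid hm hj0) _
    refine mem_compMulSubmonoid_of_X_pow_dvd_sub hm hmn ?_ (mul_mem hstep hinv)
    rw [mul_assoc, ← pow_succ', Nat.sub_add_cancel Nat.one_le_two_pow, ← dvd_neg, neg_sub,
      ← mul_sub_one]
    refine dvd_mul_of_dvd_right (X_pow_dvd_pow_two_pow_sub_one ?_ N) Q
    rw [add_sub_cancel_left]
    exact dvd_pow_self X hj0.ne'

lemma mem_Gset_iff (hm : 0 < m) (hmn : ¬ m ∣ n) {F : (Fin n → ZMod 2) → Fin n → ZMod 2} :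
    F ∈ Gset n m ↔ ∃ Q : (ZMod 2)[X], Q.coeff 0 = 1 ∧ thetaPoly n m Q = F := by
  have hpoly (a : ℕ → ZMod 2) : thetaPoly n m (1 + ∑ k ∈ Finset.Icc 1 (n / m), monomial k (a k)) =
      theta n m 0 + ∑ k ∈ Finset.Icc 1 (n / m), a k • theta n m k := by
    simp only [map_add, map_sum, thetaPoly_monomial, thetaPoly_one]; rfl
  constructor
  · rintro ⟨a, rfl⟩
    refine ⟨_, ?_, hpoly a⟩
    simp [coeff_monomial, finsetSum_coeff]
  · rintro ⟨Q, hQ, rfl⟩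
    refine ⟨Q.coeff, ?_⟩
    rw [← hpoly]
    refine thetaPoly_eq_of_X_pow_dvd_sub hm hmn (X_pow_dvd_iff.mpr fun d hd => ?_)
    rcases Nat.eq_zero_or_pos d with rfl | hd0
    · simp [coeff_monomial, finsetSum_coeff, hQ]
    · simp [coeff_monomial, finsetSum_coeff, coeff_one, hd0.ne', Nat.one_le_iff_ne_zero,
        Nat.lt_succ_iff.mp hd]

end ThetaPoly

theorem stmt6_general (n m : ℕ) (hm : 2 ≤ m) (hmn : ¬ m ∣ n) :
    (∀ f ∈ Gset n m, ∀ g ∈ Gset n m, f ∘ g ∈ Gset n m) ∧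
    (∀ f ∈ Gset n m, ∀ g ∈ Gset n m, f ∘ g = g ∘ f) ∧
    (id ∈ Gset n m) ∧
    (∀ f ∈ Gset n m, ∃ g ∈ Gset n m, f ∘ g = id ∧ g ∘ f = id) ∧
    (∀ f ∈ Gset n m, Function.Bijective f) := by
  have hm : 0 < m := by omega
  have hcomp {P Q : (ZMod 2)[X]} (hQ : Q.coeff 0 = 1) :
      thetaPoly n m P ∘ thetaPoly n m Q = thetaPoly n m (P * Q) :=
    mem_compMulSubmonoid hm hmn hQ P
  -- Over `ZMod 2`, `P ^ 2 ^ N ≡ 1 (mod X ^ N)` whenever `P` has constant term one.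
  have hinv : ∀ f ∈ Gset n m, ∃ g ∈ Gset n m, f ∘ g = id ∧ g ∘ f = id := by
    simp only [mem_Gset_iff hm hmn]
    rintro _ ⟨P, hP, rfl⟩
    have hR : (P ^ (2 ^ (n / m + 1) - 1)).coeff 0 = 1 := by
      rw [← constantCoeff_apply, map_pow, constantCoeff_apply, hP, one_pow]
    have hPR : thetaPoly n m (P * P ^ (2 ^ (n / m + 1) - 1)) = id := by
      rw [← pow_succ', Nat.sub_add_cancel Nat.one_le_two_pow, ← thetaPoly_one (n := n) (m := m)]
      exact thetaPoly_eq_of_X_pow_dvd_sub hm hmn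
        (X_pow_dvd_pow_two_pow_sub_one (X_dvd_sub_one hP) _)
    exact ⟨_, ⟨_, hR, rfl⟩, by rw [hcomp hR, hPR], by rw [hcomp hP, mul_comm, hPR]⟩
  refine ⟨?_, ?_, ?_, hinv, fun f hf => ?_⟩
  · simp only [mem_Gset_iff hm hmn]
    rintro _ ⟨P, hP, rfl⟩ _ ⟨Q, hQ, rfl⟩
    exact ⟨P * Q, by rw [mul_coeff_zero, hP, hQ, one_mul], (hcomp hQ).symm⟩
  · simp only [mem_Gset_iff hm hmn]
    rintro _ ⟨P, hP, rfl⟩ _ ⟨Q, hQ, rfl⟩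
    rw [hcomp hQ, hcomp hP, mul_comm]
  · exact (mem_Gset_iff hm hmn).mpr ⟨1, coeff_one_zero, thetaPoly_one⟩
  · obtain ⟨g, -, hfg, hgf⟩ := hinv f hf
    exact Function.bijective_iff_has_inverse.mpr ⟨g, congrFun hgf, congrFun hfg⟩

theorem stmt6 (n m : ℕ) (hn : 1 ≤ n) (hm : 2 ≤ m) (hmn : ¬ m ∣ n) :
    (∀ f ∈ Gset n m, ∀ g ∈ Gset n m, f ∘ g ∈ Gset n m) ∧
    (∀ f ∈ Gset n m, ∀ g ∈ Gset n m, f ∘ g = g ∘ f) ∧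
    (id ∈ Gset n m) ∧
    (∀ f ∈ Gset n m, ∃ g ∈ Gset n m, f ∘ g = id ∧ g ∘ f = id) ∧
    (∀ f ∈ Gset n m, Function.Bijective f) :=
  stmt6_general n m hm hmn
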